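/- The orbit of the vector (0,0,0,0,0,0,1) under the group of linear automorphisms of ℝ^7 generated by the odd and even Coxeter maps ∙c and ∘c of Ẽ6 is exactly the set K3 + ℤδ, where δ = (1,2,1,2,1,2,3) and K3 consists of the 4 vectors (0,−1,0,−1,0,−1,−1), (0,0,0,0,0,0,−1), (0,0,0,0,0,0,1), (0,1,0,1,0,1,1). In particular this Coxeter orbit is the union of exactly 4 δ-series of roots. -/

import Mathlib

@[simp] lemma cons_val_five' {α : Type*} (a b c d e f g : α) : ![a,b,c,d,e,f,g] 5 = f := rfl
@[simp] lemma cons_val_six' {α : Type*} (a b c d e f g : α) : ![a,b,c,d,e,f,g] 6 = g := rfl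

/-- The odd Coxeter map `∙c` of `Ẽ6`:
`∙c(x) = (x2−x1, x2, x4−x3, x4, x6−x5, x6, x2+x4+x6−x0)` in the coordinates
`x = (x1,…,x6,x0)` (here `x i`, `i = 0,…,5`, are `x1,…,x6` and `x 6` is `x0`). -/
def cOddFun (x : Fin 7 → ℝ) : Fin 7 → ℝ :=
  ![x 1 - x 0, x 1, x 3 - x 2, x 3, x 5 - x 4, x 5, x 1 + x 3 + x 5 - x 6]

/-- The even Coxeter map `∘c` of `Ẽ6`:
`∘c(x) = (x1, x1+x0−x2, x3, x3+x0−x4, x5, x5+x0−x6, x0)`. -/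
def cEvenFun (x : Fin 7 → ℝ) : Fin 7 → ℝ :=
  ![x 0, x 0 + x 6 - x 1, x 2, x 2 + x 6 - x 3, x 4, x 4 + x 6 - x 5, x 6]

lemma cOddFun_involutive : Function.Involutive cOddFun := by
  intro x; funext i; fin_cases i <;> simp [cOddFun]

lemma cEvenFun_involutive : Function.Involutive cEvenFun := by
  intro x; funext i; fin_cases i <;> simp [cEvenFun]

/-- The odd Coxeter map as a (linear) automorphism of `ℝ^7`. -/
def cOdd : Equiv.Perm (Fin 7 → ℝ) := cOddFun_involutive.toPerm

/-- The even Coxeter map as a (linear) automorphism of `ℝ^7`. -/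
def cEven : Equiv.Perm (Fin 7 → ℝ) := cEvenFun_involutive.toPerm

/-- The minimal imaginary root `δ = (1,2,1,2,1,2,3)` of `Ẽ6`. -/
def deltaE6 : Fin 7 → ℝ := ![1, 2, 1, 2, 1, 2, 3]

/-- The 4 vectors of the Coxeter series `K3`. -/
def K3 : Set (Fin 7 → ℝ) :=
  { ![0, -1, 0, -1, 0, -1, -1], ![0, 0, 0, 0, 0, 0, -1],
    ![0, 0, 0, 0, 0, 0, 1], ![0, 1, 0, 1, 0, 1, 1] }

/-!
Both Coxeter maps are additive and fix `δ`, and they permute `K3 = {±e, ±v}` (with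
`e = (0,0,0,0,0,0,1)`, `v = (0,1,0,1,0,1,1)`) up to multiples of `δ`: `∘c` swaps `e` and `v`,
while `∙c` sends `e ↦ -e` and `v ↦ -v + δ`. Hence `K3 + ℤδ` is invariant under the group and
contains the orbit of `e`. Conversely `∙c ∘c ∙c ∘c` translates `e + kδ` to `e + (k+1)δ`, so the
orbit contains `e + ℤδ`, and one or two more Coxeter maps reach the other three series.
The series are disjoint because the `x1`-coordinate vanishes on `K3` and equals `1` on `δ`.
-/

open MulAction Set

section DeltaSeries

variable {V : Type*} [AddCommGroup V]

def deltaSeries (d : V) (A : Set V) : Set V := {y | ∃ a ∈ A, ∃ k : ℤ, y = a + k • d}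

lemma subset_deltaSeries (d : V) (A : Set V) : A ⊆ deltaSeries d A :=
  fun a ha => ⟨a, ha, 0, by rw [zero_smul, add_zero]⟩

lemma mapsTo_deltaSeries {d : V} {A : Set V} (f : V →+ V) (hfd : f d = d)
    (hA : ∀ a ∈ A, f a ∈ deltaSeries d A) : MapsTo f (deltaSeries d A) (deltaSeries d A) := by
  rintro _ ⟨a, ha, k, rfl⟩
  obtain ⟨b, hb, l, hfa⟩ := hA a ha
  refine ⟨b, hb, l + k, ?_⟩
  rw [map_add, map_zsmul, hfd, hfa, add_zsmul, add_assoc]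

lemma injOn_add_zsmul {W : Type*} [AddCommGroup W] [IsAddTorsionFree W] (φ : V →+ W)
    {A : Set V} {d : V} (hA : ∀ a ∈ A, φ a = 0) (hd : φ d ≠ 0) :
    InjOn (fun p : V × ℤ => p.1 + p.2 • d) (A ×ˢ univ) := by
  rintro ⟨a, k⟩ ⟨ha, -⟩ ⟨b, l⟩ ⟨hb, -⟩ h
  have hkl : k = l := by
    have := congrArg φ h
    simp only [map_add, map_zsmul, hA a ha, hA b hb, zero_add] at this
    exact smul_left_injective ℤ hd this
  subst hkl
  exact Prod.ext (add_right_cancel h) rfl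

end DeltaSeries

lemma mapsTo_smul_of_mem_closure {G α : Type*} [Group G] [MulAction G α] {T : Set G} {S : Set α}
    (hT_inv : ∀ t ∈ T, t⁻¹ ∈ T) (hT : ∀ t ∈ T, MapsTo (t • ·) S S) {g : G}
    (hg : g ∈ Subgroup.closure T) : MapsTo (g • ·) S S := by
  induction hg using Subgroup.closure_induction'' with
  | mem t ht => exact hT t ht
  | inv_mem t ht => exact hT _ (hT_inv t ht)
  | one => exact fun x hx => by simpa only [one_smul] using hx
  | mul g h _ _ hg hh => exact fun x hx => by simpa only [mul_smul] using hg (hh hx)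

lemma smul_mem_orbit_iff {G α : Type*} [Group G] [MulAction G α] {H : Subgroup G} {g : G}
    (hg : g ∈ H) {x y : α} : g • y ∈ orbit H x ↔ y ∈ orbit H x := by
  rw [← orbit_eq_iff, ← orbit_eq_iff, show g • y = (⟨g, hg⟩ : H) • y from rfl, orbit_smul]

def cOddHom : (Fin 7 → ℝ) →+ (Fin 7 → ℝ) :=
  AddMonoidHom.mk' cOddFun fun x y => by
    funext i; fin_cases i <;> simp [cOddFun] <;> ring

def cEvenHom : (Fin 7 → ℝ) →+ (Fin 7 → ℝ) :=
  AddMonoidHom.mk' cEvenFun fun x y => by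
    funext i; fin_cases i <;> simp [cEvenFun] <;> ring

lemma cOdd_smul (x : Fin 7 → ℝ) : cOdd • x = cOddHom x := rfl

lemma cEven_smul (x : Fin 7 → ℝ) : cEven • x = cEvenHom x := rfl

lemma cOdd_inv : cOdd⁻¹ = cOdd := by
  rw [Equiv.Perm.inv_def, cOdd, Function.Involutive.toPerm_symm]

lemma cEven_inv : cEven⁻¹ = cEven := by
  rw [Equiv.Perm.inv_def, cEven, Function.Involutive.toPerm_symm]

def rootE : Fin 7 → ℝ := ![0, 0, 0, 0, 0, 0, 1]

def rootV : Fin 7 → ℝ := ![0, 1, 0, 1, 0, 1, 1]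

lemma K3_eq : K3 = {-rootV, -rootE, rootE, rootV} := by
  simp [K3, rootE, rootV]

lemma cOddHom_deltaE6 : cOddHom deltaE6 = deltaE6 := by
  funext i; fin_cases i <;> simp [cOddHom, cOddFun, deltaE6] <;> norm_num

lemma cEvenHom_deltaE6 : cEvenHom deltaE6 = deltaE6 := by
  funext i; fin_cases i <;> simp [cEvenHom, cEvenFun, deltaE6] <;> norm_num

lemma cOddHom_rootE : cOddHom rootE = -rootE := by
  funext i; fin_cases i <;> simp [cOddHom, cOddFun, rootE]

lemma cOddHom_rootV : cOddHom rootV = -rootV + deltaE6 := by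
  funext i; fin_cases i <;> simp [cOddHom, cOddFun, rootV, deltaE6] <;> norm_num

lemma cEvenHom_rootE : cEvenHom rootE = rootV := by
  funext i; fin_cases i <;> simp [cEvenHom, cEvenFun, rootE, rootV]

lemma cEvenHom_rootV : cEvenHom rootV = rootE := by
  funext i; fin_cases i <;> simp [cEvenHom, cEvenFun, rootE, rootV]

abbrev coxeterGroup : Subgroup (Equiv.Perm (Fin 7 → ℝ)) := Subgroup.closure {cOdd, cEven}

lemma cOdd_mem : cOdd ∈ coxeterGroup := Subgroup.subset_closure (by simp)

lemma cEven_mem : cEven ∈ coxeterGroup := Subgroup.subset_closure (by simp)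

lemma cOddHom_mapsTo : MapsTo cOddHom (deltaSeries deltaE6 K3) (deltaSeries deltaE6 K3) := by
  refine mapsTo_deltaSeries cOddHom cOddHom_deltaE6 ?_
  rw [K3_eq]
  rintro a (rfl | rfl | rfl | rfl)
  · exact ⟨rootV, by simp, -1, by rw [map_neg, cOddHom_rootV]; module⟩
  · exact ⟨rootE, by simp, 0, by rw [map_neg, cOddHom_rootE]; module⟩
  · exact ⟨-rootE, by simp, 0, by rw [cOddHom_rootE]; module⟩
  · exact ⟨-rootV, by simp, 1, by rw [cOddHom_rootV]; module⟩

lemma cEvenHom_mapsTo : MapsTo cEvenHom (deltaSeries deltaE6 K3) (deltaSeries deltaE6 K3) := by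
  refine mapsTo_deltaSeries cEvenHom cEvenHom_deltaE6 fun a ha => subset_deltaSeries _ _ ?_
  rw [K3_eq] at ha ⊢
  rcases ha with rfl | rfl | rfl | rfl <;>
    simp [cEvenHom_rootE, cEvenHom_rootV]

lemma orbit_subset_deltaSeries : orbit coxeterGroup rootE ⊆ deltaSeries deltaE6 K3 := by
  rintro _ ⟨⟨g, hg⟩, rfl⟩
  refine mapsTo_smul_of_mem_closure ?_ ?_ hg (subset_deltaSeries _ _ (by simp [K3_eq]))
  · rintro t (rfl | rfl)
    exacts [by simp [cOdd_inv], by simp [cEven_inv]]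
  · rintro t (rfl | rfl)
    exacts [cOddHom_mapsTo, cEvenHom_mapsTo]

lemma translation_smul (k : ℤ) :
    (cOdd * cEven * cOdd * cEven) • (rootE + k • deltaE6) = rootE + (k + 1) • deltaE6 := by
  simp only [mul_smul, cOdd_smul, cEven_smul, map_add, map_zsmul, map_neg, cOddHom_deltaE6,
    cEvenHom_deltaE6, cOddHom_rootE, cOddHom_rootV, cEvenHom_rootE, cEvenHom_rootV]
  module

lemma rootE_add_zsmul_mem_orbit (k : ℤ) : rootE + k • deltaE6 ∈ orbit coxeterGroup rootE := by
  have step (k : ℤ) : rootE + (k + 1) • deltaE6 ∈ orbit coxeterGroup rootE ↔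
      rootE + k • deltaE6 ∈ orbit coxeterGroup rootE := by
    rw [← translation_smul]
    exact smul_mem_orbit_iff (mul_mem (mul_mem (mul_mem cOdd_mem cEven_mem) cOdd_mem) cEven_mem)
  induction k using Int.induction_on with
  | zero => simpa only [zero_smul, add_zero] using mem_orbit_self rootE
  | succ k ih => exact_mod_cast (step k).2 ih
  | pred k ih => exact (step _).1 (by rwa [sub_add_cancel])

lemma deltaSeries_subset_orbit : deltaSeries deltaE6 K3 ⊆ orbit coxeterGroup rootE := by
  rintro _ ⟨a, ha, k, rfl⟩
  have he := rootE_add_zsmul_mem_orbit k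
  have hne := (smul_mem_orbit_iff cOdd_mem).2 he
  simp only [cOdd_smul, map_add, map_zsmul, cOddHom_rootE, cOddHom_deltaE6] at hne
  rw [K3_eq] at ha
  rcases ha with rfl | rfl | rfl | rfl
  · simpa only [cEven_smul, map_add, map_zsmul, map_neg, cEvenHom_rootE, cEvenHom_deltaE6]
      using (smul_mem_orbit_iff cEven_mem).2 hne
  · exact hne
  · exact he
  · simpa only [cEven_smul, map_add, map_zsmul, cEvenHom_rootE, cEvenHom_deltaE6]
      using (smul_mem_orbit_iff cEven_mem).2 he

/-- The orbit of `(0,0,0,0,0,0,1)` under the group generated by the odd and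
even Coxeter maps of `Ẽ6` is exactly `K3 + ℤδ`; moreover the map
`(v,k) ↦ v + kδ` is injective on `K3 × ℤ`, so this orbit is the union of
exactly 4 `δ`-series of roots. -/
theorem coxeter_orbit_K3 :
    MulAction.orbit (Subgroup.closure {cOdd, cEven} : Subgroup (Equiv.Perm (Fin 7 → ℝ)))
        (![0, 0, 0, 0, 0, 0, 1] : Fin 7 → ℝ)
      = {y | ∃ v ∈ K3, ∃ k : ℤ, y = v + k • deltaE6} ∧
    Set.InjOn (fun p : (Fin 7 → ℝ) × ℤ => p.1 + p.2 • deltaE6) (K3 ×ˢ Set.univ) := by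
  refine ⟨orbit_subset_deltaSeries.antisymm deltaSeries_subset_orbit, ?_⟩
  refine injOn_add_zsmul (Pi.evalAddMonoidHom (fun _ => ℝ) 0) ?_ (by simp [deltaE6])
  rw [K3_eq]
  rintro a (rfl | rfl | rfl | rfl) <;> simp [rootE, rootV]
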